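/- Let n, k be integers with n ≥ 1 and 1 ≤ k ≤ n, let G be a finite simple graph with vertex set {v_1,…,v_n}, and let G′ be the dominating-set reduction graph of (G,k). Then G′ is chordal, and there exists a tree whose vertex set is exactly the set of maximal cliques of G′, which satisfies the clique-intersection property, and in which every vertex has degree at most 4. -/

import Mathlib

/-- An independent set of a graph, as a finset of pairwise non-adjacent vertices. -/
def IsIndepF {V : Type*} (H : SimpleGraph V) (I : Finset V) : Prop :=
  ∀ u ∈ I, ∀ v ∈ I, ¬ H.Adj u v

/-- A graph is chordal if it has no induced cycle of length at least four. -/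
def Chordal {V : Type*} (H : SimpleGraph V) : Prop :=
  ∀ m : ℕ, 4 ≤ m → IsEmpty (SimpleGraph.cycleGraph m ↪g H)

/-- A maximal clique of a graph, as a finset. -/
def IsMaxClique {V : Type*} (H : SimpleGraph V) (K : Finset V) : Prop :=
  H.IsClique (K : Set V) ∧ ∀ K' : Finset V, H.IsClique (K' : Set V) → K ⊆ K' → K' = K

/-- Vertices of the dominating-set reduction graph: `C` has `n+k+1` vertices,
`W`, `X`, `Y` have `n+k+2` vertices each. -/
inductive RVert (n k : ℕ) : Type where
  | c : Fin (n + k + 1) → RVert n k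
  | w : Fin (n + k + 2) → RVert n k
  | x : Fin (n + k + 2) → RVert n k
  | y : Fin (n + k + 2) → RVert n k
deriving DecidableEq

/-- The dominating-set reduction graph `G'` of `(G, k)`.  (Indices are 0-based:
`RVert.c i` with `i : Fin (n+k+1)` is the vertex `c_{i+1}`, etc.) -/
def redGraph (n k : ℕ) (G : SimpleGraph (Fin n)) : SimpleGraph (RVert n k) :=
  SimpleGraph.fromRel (fun a b =>
    match a, b with
    | .c i, .c j => i ≠ j
    | .c i, .w j =>
        (∃ (hi : i.val < n) (hj : j.val < n), G.Adj ⟨i.val, hi⟩ ⟨j.val, hj⟩)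
        ∨ (i.val = j.val)
        ∨ (i.val < n ∧ j.val = n + k + 1)
    | .x i, .y j => i = j
    | .x _, .c _ => True
    | _, _ => False)

/-- The tree `T` on the maximal cliques of `H` satisfies the clique-intersection
property: for all maximal cliques `K`, `K'`, the set `K ∩ K'` is contained in every
maximal clique on the path between `K` and `K'` in `T`. -/
def CliqueIntersectionProperty {V : Type*} [DecidableEq V] (H : SimpleGraph V)
    (T : SimpleGraph {K : Finset V // IsMaxClique H K}) : Prop :=
  ∀ (K K' : {K : Finset V // IsMaxClique H K}) (p : T.Walk K K'), p.IsPath →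
    ∀ L ∈ p.support, K.1 ∩ K'.1 ⊆ L.1

/-!
The maximal cliques of `G′` are `C ∪ {x_i}`, `{x_i, y_i}` and the closed neighbourhoods
`N[w_i]` (which lie in `C ∪ {w_i}`). Chaining the cliques `C ∪ {x_i}` into a path and hanging
`{x_i, y_i}` and `N[w_i]` as leaves off `C ∪ {x_i}` gives a tree of maximum degree 4. Two
distinct cliques that are not adjacent in this tree meet inside `C`, and `C` lies in every inner
vertex of a path, since inner vertices are not leaves; this is the clique-intersection property.

For chordality: a vertex of an induced cycle of length at least four has two non-adjacent
neighbours on the cycle. The `y_i` and `w_i` have clique neighbourhoods, so they are on no such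
cycle; without them the `x_i` have clique neighbourhoods too, and what remains is the clique `C`.
-/

open SimpleGraph

section ParentGraph

variable {V : Type*}

def parentGraph (p : V → V) : SimpleGraph V := SimpleGraph.fromRel fun a b => p a = b

variable {p : V → V}

lemma parentGraph_adj {a b : V} :
    (parentGraph p).Adj a b ↔ a ≠ b ∧ (p a = b ∨ p b = a) := by
  simp [parentGraph]

lemma neighborSet_parentGraph_subset (v : V) :
    (parentGraph p).neighborSet v ⊆ insert (p v) {u | p u = v ∧ u ≠ v} := by
  intro u hu
  obtain ⟨hne, h | h⟩ := parentGraph_adj.mp hu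
  · exact .inl h.symm
  · exact .inr ⟨h, hne.symm⟩

lemma neighborSet_parentGraph_subset_singleton {v : V} (hv : v ∉ Set.range p) :
    (parentGraph p).neighborSet v ⊆ {p v} := by
  intro u hu
  obtain h | ⟨h, -⟩ := neighborSet_parentGraph_subset v hu
  · exact h
  · exact absurd ⟨u, h⟩ hv

variable {r : V → ℕ} (hr : ∀ v, p v ≠ v → r (p v) < r v)
include hr

lemma parentGraph_reachable {root : V} (hroot : ∀ v, p v = v → v = root) (v : V) :
    (parentGraph p).Reachable v root := by
  induction hv : r v using Nat.strong_induction_on generalizing v with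
  | _ m ih =>
    by_cases h : p v = v
    · rw [hroot v h]
    · have hadj : (parentGraph p).Adj v (p v) := parentGraph_adj.mpr ⟨Ne.symm h, .inl rfl⟩
      exact hadj.reachable.trans (ih _ (hv ▸ hr v h) _ rfl)

lemma parentGraph_isAcyclic : (parentGraph p).IsAcyclic := by
  classical
  intro v c hc
  obtain ⟨u, hu, hmax⟩ := c.support.toFinset.exists_max_image r ⟨v, by simp⟩
  rw [List.mem_toFinset] at hu
  set c' := c.rotate u hu
  have hc' : c'.IsCycle := hc.rotate hu
  -- both cycle-neighbours of a vertex of maximal rank must be its parent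
  have hparent : ∀ z ∈ c'.support, (parentGraph p).Adj u z → p u = z := by
    intro z hz hadj
    obtain ⟨hne, h | h⟩ := parentGraph_adj.mp hadj
    · exact h
    · have := hr z (by rwa [h])
      rw [h] at this
      exact absurd (hmax z (by simpa [c'] using hz)) (by simpa using this)
  exact hc'.snd_ne_penultimate <|
    (hparent _ (c'.getVert_mem_support 1) (c'.adj_snd hc'.not_nil)).symm.trans
      (hparent _ (c'.getVert_mem_support _) (c'.adj_penultimate hc'.not_nil).symm)

lemma parentGraph_isTree {root : V} (hroot : ∀ v, p v = v → v = root) :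
    (parentGraph p).IsTree :=
  have hreach := parentGraph_reachable hr hroot
  ⟨(connected_iff _).mpr ⟨fun u v => (hreach u).trans (hreach v).symm, ⟨root⟩⟩,
    parentGraph_isAcyclic hr⟩

end ParentGraph

section PathsInTrees

variable {α V : Type*} {T : SimpleGraph α}

lemma SimpleGraph.Walk.IsPath.eq_or_eq_of_subsingleton_neighborSet {a b c : α}
    {p : T.Walk a b} (hp : p.IsPath) (hc : c ∈ p.support)
    (hsub : (T.neighborSet c).Subsingleton) :
    c = a ∨ c = b := by
  induction p with
  | nil => exact .inl (by simpa using hc)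
  | @cons a a₁ b h q ih =>
    rw [Walk.cons_isPath_iff] at hp
    obtain rfl | hcq : c = a ∨ c ∈ q.support := by simpa using hc
    · exact .inl rfl
    obtain rfl | rfl := ih hp.1 hcq
    · cases q with
      | nil => exact .inr rfl
      | cons h₂ q₂ =>
        have : a = _ := hsub (h.symm : T.Adj _ a) h₂
        exact (hp.2 (by simp [this])).elim
    · exact .inr rfl

lemma SimpleGraph.Walk.IsPath.eq_or_eq_of_adj (hT : T.IsAcyclic) {a b c : α} {p : T.Walk a b}
    (hp : p.IsPath) (hc : c ∈ p.support) (hab : T.Adj a b) : c = a ∨ c = b := by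
  have : p = hab.toWalk := congrArg Subtype.val
    ((hT.subsingleton_path a b).elim ⟨p, hp⟩ ⟨_, hab.isPath_toWalk⟩)
  subst this
  simpa using hc

variable [DecidableEq V]

lemma SimpleGraph.Walk.IsPath.inter_subset_of_mem_support (hT : T.IsAcyclic)
    {f : α → Finset V} {S : Finset V}
    (hS : ∀ a b, a ≠ b → ¬ T.Adj a b → f a ∩ f b ⊆ S)
    (hcore : ∀ c, (T.neighborSet c).Subsingleton ∨ S ⊆ f c)
    {a b c : α} {p : T.Walk a b} (hp : p.IsPath) (hc : c ∈ p.support) :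
    f a ∩ f b ⊆ f c := by
  have hend : c = a ∨ c = b → f a ∩ f b ⊆ f c := by
    rintro (rfl | rfl)
    exacts [Finset.inter_subset_left, Finset.inter_subset_right]
  obtain hsub | hSc := hcore c
  · exact hend (hp.eq_or_eq_of_subsingleton_neighborSet hc hsub)
  by_cases hab : a = b
  · subst hab
    have hnil := Walk.nil_iff_support_eq.mp (Walk.isPath_iff_nil.mp hp)
    exact hend (.inl (by simpa [hnil] using hc))
  by_cases hadj : T.Adj a b
  · exact hend (hp.eq_or_eq_of_adj hT hc hadj)
  · exact (hS a b hab hadj).trans hSc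

end PathsInTrees

lemma isMaxClique_of_forall_notMem {V : Type*} {H : SimpleGraph V} {K : Finset V}
    (hK : H.IsClique (K : Set V)) (h : ∀ u ∉ K, ∃ v ∈ K, ¬ H.Adj u v) :
    IsMaxClique H K := by
  refine ⟨hK, fun K' hK' hKK' => (hKK'.antisymm fun u hu => ?_).symm⟩
  by_contra huK
  obtain ⟨v, hv, hnadj⟩ := h u huK
  exact hnadj (hK' hu (hKK' hv) (ne_of_mem_of_not_mem hv huK).symm)

lemma not_isClique_neighborSet_inter_range_of_cycleGraph_embedding {V : Type*}
    {H : SimpleGraph V} {m : ℕ} (hm : 4 ≤ m) (f : cycleGraph m ↪g H) (i : Fin m) :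
    ¬ H.IsClique (H.neighborSet (f i) ∩ Set.range f) := by
  obtain ⟨q, rfl⟩ : ∃ q, m = q + 4 := ⟨m - 4, by omega⟩
  have hne : i - 1 ≠ i + 1 := by
    rw [Ne, sub_eq_iff_eq_add, add_assoc, left_eq_add, Fin.ext_iff, Fin.val_add]
    simp [Nat.mod_eq_of_lt]
  have hnadj : ¬ (cycleGraph (q + 4)).Adj (i - 1) (i + 1) := by
    rw [cycleGraph_adj, show i - 1 - (i + 1) = -2 by abel, show i + 1 - (i - 1) = 2 by abel]
    simp [Fin.ext_iff, Fin.val_neg, Nat.mod_eq_of_lt]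
  intro h
  refine hnadj (f.map_adj_iff.mp (h ⟨?_, i - 1, rfl⟩ ⟨?_, i + 1, rfl⟩ (f.injective.ne hne)))
  · exact f.map_adj_iff.mpr (by simp [cycleGraph_adj])
  · exact f.map_adj_iff.mpr (by simp [cycleGraph_adj])

inductive CliqueIdx (N : ℕ) : Type where
  | cx : Fin N → CliqueIdx N
  | xy : Fin N → CliqueIdx N
  | w : Fin N → CliqueIdx N
deriving DecidableEq

namespace CliqueIdx

variable {N : ℕ}

def parent : CliqueIdx N → CliqueIdx N
  | cx i => cx ⟨i - 1, by omega⟩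
  | xy i => cx i
  | w i => cx i

def rank : CliqueIdx N → ℕ
  | cx i => i
  | xy i => i + 1
  | w i => i + 1

lemma rank_parent_lt {v : CliqueIdx N} (hv : v.parent ≠ v) : v.parent.rank < v.rank := by
  cases v with
  | cx i =>
    simp only [parent, rank, ne_eq, cx.injEq, Fin.ext_iff] at hv ⊢
    omega
  | xy i | w i => simp [parent, rank]

lemma parent_ne_xy (v : CliqueIdx N) (i : Fin N) : v.parent ≠ xy i := by
  cases v <;> simp [parent]

lemma parent_ne_w (v : CliqueIdx N) (i : Fin N) : v.parent ≠ w i := by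
  cases v <;> simp [parent]

end CliqueIdx

def cliqueTree (N : ℕ) : SimpleGraph (CliqueIdx N) := parentGraph CliqueIdx.parent

lemma cliqueTree_isTree (N : ℕ) : (cliqueTree (N + 1)).IsTree := by
  refine parentGraph_isTree (fun _ => CliqueIdx.rank_parent_lt) (root := .cx 0) fun v hv => ?_
  cases v with
  | cx i =>
    simp only [CliqueIdx.parent, CliqueIdx.cx.injEq, Fin.ext_iff, Fin.val_zero] at hv ⊢
    omega
  | xy i | w i => simp [CliqueIdx.parent] at hv

lemma cliqueTree_neighborSet_subsingleton {N : ℕ} {v : CliqueIdx N} (hv : ∀ i, v ≠ .cx i) :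
    ((cliqueTree N).neighborSet v).Subsingleton := by
  refine Set.subsingleton_singleton.anti (neighborSet_parentGraph_subset_singleton ?_)
  rintro ⟨u, hu⟩
  cases v with
  | cx i => exact hv i rfl
  | xy i => exact u.parent_ne_xy i hu
  | w i => exact u.parent_ne_w i hu

lemma ncard_neighborSet_cliqueTree_le {N : ℕ} (v : CliqueIdx (N + 1)) :
    ((cliqueTree (N + 1)).neighborSet v).ncard ≤ 4 := by
  by_cases hv : ∃ i, v = .cx i
  · obtain ⟨i, rfl⟩ := hv
    have hsub : (cliqueTree (N + 1)).neighborSet (.cx i) ⊆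
        ↑({(CliqueIdx.cx i).parent, .cx (i + 1), .xy i, .w i} : Finset (CliqueIdx (N + 1))) := by
      intro u hu
      obtain h | ⟨h, hne⟩ := neighborSet_parentGraph_subset _ hu
      · simp [h]
      cases u with
      | cx j =>
        simp only [CliqueIdx.parent, CliqueIdx.cx.injEq, Fin.ext_iff, ne_eq] at h hne
        have : j = i + 1 := Fin.ext (by rw [Fin.val_add_one_of_lt' (by omega)]; omega)
        simp [this]
      | xy j | w j => simp_all [CliqueIdx.parent]
    exact (Set.ncard_le_ncard hsub (Finset.finite_toSet _)).trans
      ((Set.ncard_coe_finset _).trans_le Finset.card_le_four)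
  · have hs := cliqueTree_neighborSet_subsingleton (v := v) (by simpa using hv)
    exact ((Set.ncard_le_one hs.finite).mpr fun _ ha _ hb => hs ha hb).trans (by norm_num)

section Reduction

variable {n k : ℕ} {G : SimpleGraph (Fin n)}

def cSet (n k : ℕ) : Finset (RVert n k) := Finset.univ.image RVert.c

@[simp]
lemma mem_cSet {u : RVert n k} : u ∈ cSet n k ↔ ∃ i, RVert.c i = u := by
  simp [cSet]

lemma redGraph_adj_c_c {i j : Fin (n + k + 1)} :
    (redGraph n k G).Adj (.c i) (.c j) ↔ i ≠ j := by
  simp [redGraph, ne_comm]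

lemma redGraph_adj_x_c (i : Fin (n + k + 2)) (j : Fin (n + k + 1)) :
    (redGraph n k G).Adj (.x i) (.c j) := by
  simp [redGraph]

lemma redGraph_adj_x_y (i : Fin (n + k + 2)) : (redGraph n k G).Adj (.x i) (.y i) := by
  simp [redGraph]

lemma redGraph_adj_y {a : Fin (n + k + 2)} {u : RVert n k} :
    (redGraph n k G).Adj (.y a) u ↔ u = .x a := by
  cases u <;> simp [redGraph, eq_comm]

lemma redGraph_adj_x {a : Fin (n + k + 2)} {u : RVert n k} :
    (redGraph n k G).Adj (.x a) u ↔ u = .y a ∨ u ∈ cSet n k := by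
  cases u <;> simp [redGraph, eq_comm]

lemma mem_cSet_of_redGraph_adj_w {a : Fin (n + k + 2)} {u : RVert n k}
    (h : (redGraph n k G).Adj (.w a) u) : u ∈ cSet n k := by
  cases u <;> simp_all [redGraph]

lemma redGraph_isClique_cSet : (redGraph n k G).IsClique (cSet n k : Set (RVert n k)) := by
  intro u hu v hv hne
  obtain ⟨i, rfl⟩ := mem_cSet.mp hu
  obtain ⟨j, rfl⟩ := mem_cSet.mp hv
  exact redGraph_adj_c_c.mpr (by simpa using hne)

theorem redGraph_chordal : Chordal (redGraph n k G) := by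
  intro m hm
  refine ⟨fun f => ?_⟩
  have hS : ∀ u ∈ Set.range f, ∀ s, (redGraph n k G).IsClique s →
      ¬ (redGraph n k G).neighborSet u ∩ Set.range f ⊆ s := by
    rintro _ ⟨i, rfl⟩ s hs hsub
    exact not_isClique_neighborSet_inter_range_of_cycleGraph_embedding hm f i (hs.subset hsub)
  have hy (a) : RVert.y a ∉ Set.range f := fun h =>
    hS _ h {RVert.x a} (isClique_singleton _) fun u hu => redGraph_adj_y.mp hu.1
  have hw (a) : RVert.w a ∉ Set.range f := fun h =>
    hS _ h _ redGraph_isClique_cSet fun u hu => mem_cSet_of_redGraph_adj_w hu.1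
  have hx (a) : RVert.x a ∉ Set.range f := fun h =>
    hS _ h _ redGraph_isClique_cSet fun u ⟨hu, hf⟩ =>
      (redGraph_adj_x.mp hu).resolve_left (by rintro rfl; exact hy a hf)
  have hc : Set.range f ⊆ cSet n k := by
    rintro (u | u | u | u) hu
    exacts [mem_cSet.mpr ⟨u, rfl⟩, (hw u hu).elim, (hx u hu).elim, (hy u hu).elim]
  exact hS _ ⟨⟨0, by omega⟩, rfl⟩ _ redGraph_isClique_cSet fun u hu => hc hu.2

open Classical in
noncomputable def redClique (n k : ℕ) (G : SimpleGraph (Fin n)) :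
    CliqueIdx (n + k + 2) → Finset (RVert n k)
  | .cx i => insert (.x i) (cSet n k)
  | .xy i => {.x i, .y i}
  | .w i => insert (.w i) ((cSet n k).filter ((redGraph n k G).Adj (.w i)))

@[simp]
lemma mem_redClique_cx {i : Fin (n + k + 2)} {u : RVert n k} :
    u ∈ redClique n k G (.cx i) ↔ u = .x i ∨ u ∈ cSet n k := by
  simp [redClique]

@[simp]
lemma mem_redClique_xy {i : Fin (n + k + 2)} {u : RVert n k} :
    u ∈ redClique n k G (.xy i) ↔ u = .x i ∨ u = .y i := by
  simp [redClique]

@[simp]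
lemma mem_redClique_w {i : Fin (n + k + 2)} {u : RVert n k} :
    u ∈ redClique n k G (.w i) ↔
      u = .w i ∨ u ∈ cSet n k ∧ (redGraph n k G).Adj (.w i) u := by
  simp [redClique]

lemma x_mem_redClique {a : Fin (n + k + 2)} {v : CliqueIdx (n + k + 2)} :
    .x a ∈ redClique n k G v ↔ v = .cx a ∨ v = .xy a := by
  cases v <;> simp [eq_comm]

lemma y_mem_redClique {a : Fin (n + k + 2)} {v : CliqueIdx (n + k + 2)} :
    .y a ∈ redClique n k G v ↔ v = .xy a := by
  cases v <;> simp [eq_comm]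

lemma w_mem_redClique {a : Fin (n + k + 2)} {v : CliqueIdx (n + k + 2)} :
    .w a ∈ redClique n k G v ↔ v = .w a := by
  cases v <;> simp [eq_comm]

lemma redGraph_isClique_redClique (v : CliqueIdx (n + k + 2)) :
    (redGraph n k G).IsClique (redClique n k G v : Set (RVert n k)) := by
  cases v with
  | cx i =>
    simp only [redClique, Finset.coe_insert, isClique_insert]
    refine ⟨redGraph_isClique_cSet, fun u hu _ => ?_⟩
    obtain ⟨j, rfl⟩ := mem_cSet.mp hu
    exact redGraph_adj_x_c i j
  | xy i =>
    simp only [redClique, Finset.coe_insert, Finset.coe_singleton, isClique_pair]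
    exact fun _ => redGraph_adj_x_y i
  | w i =>
    simp only [redClique, Finset.coe_insert, isClique_insert, Finset.coe_filter]
    exact ⟨redGraph_isClique_cSet.subset fun u hu => hu.1, fun u hu _ => hu.2⟩

lemma isMaxClique_redClique (v : CliqueIdx (n + k + 2)) :
    IsMaxClique (redGraph n k G) (redClique n k G v) := by
  refine isMaxClique_of_forall_notMem (redGraph_isClique_redClique v) fun u hu => ?_
  cases v with
  | cx i =>
    by_cases hy : ∃ j, u = .y j
    · obtain ⟨j, rfl⟩ := hy
      exact ⟨.c 0, by simp, fun h => by simp [redGraph_adj_y] at h⟩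
    · refine ⟨.x i, by simp, fun h => ?_⟩
      obtain rfl | hc := redGraph_adj_x.mp h.symm
      exacts [hy ⟨i, rfl⟩, hu (by simp [hc])]
  | xy i => exact ⟨.y i, by simp, fun h => hu (by simp [redGraph_adj_y.mp h.symm])⟩
  | w i =>
    exact ⟨.w i, by simp, fun h => hu (by simp [mem_cSet_of_redGraph_adj_w h.symm, h.symm])⟩

lemma redClique_injective : Function.Injective (redClique n k G) := by
  intro u v h
  cases u with
  | cx i =>
    obtain rfl | rfl := x_mem_redClique.mp (h ▸ x_mem_redClique.mpr (.inl rfl))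
    · rfl
    · cases y_mem_redClique.mp
        (h ▸ y_mem_redClique.mpr rfl : RVert.y i ∈ redClique n k G (.cx i))
  | xy i => exact (y_mem_redClique.mp (h ▸ y_mem_redClique.mpr rfl)).symm
  | w i => exact (w_mem_redClique.mp (h ▸ w_mem_redClique.mpr rfl)).symm

lemma exists_subset_redClique {K : Finset (RVert n k)}
    (hK : (redGraph n k G).IsClique (K : Set (RVert n k))) : ∃ v, K ⊆ redClique n k G v := by
  by_cases hy : ∃ a, RVert.y a ∈ K
  · obtain ⟨a, ha⟩ := hy
    refine ⟨.xy a, fun u hu => ?_⟩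
    by_cases h : u = .y a
    · simp [h]
    · simp [redGraph_adj_y.mp (hK ha hu (Ne.symm h))]
  by_cases hw : ∃ a, RVert.w a ∈ K
  · obtain ⟨a, ha⟩ := hw
    refine ⟨.w a, fun u hu => ?_⟩
    by_cases h : u = .w a
    · simp [h]
    · have hadj := hK ha hu (Ne.symm h)
      simp [mem_cSet_of_redGraph_adj_w hadj, hadj]
  by_cases hx : ∃ a, RVert.x a ∈ K
  · obtain ⟨a, ha⟩ := hx
    refine ⟨.cx a, fun u hu => ?_⟩
    by_cases h : u = .x a
    · simp [h]
    · obtain rfl | hc := redGraph_adj_x.mp (hK ha hu (Ne.symm h))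
      exacts [(hy ⟨a, hu⟩).elim, by simp [hc]]
  · refine ⟨.cx 0, fun u hu => ?_⟩
    cases u with
    | c i => simp
    | w a => exact (hw ⟨a, hu⟩).elim
    | x a => exact (hx ⟨a, hu⟩).elim
    | y a => exact (hy ⟨a, hu⟩).elim

variable (n k G) in
noncomputable def redCliqueEquiv :
    CliqueIdx (n + k + 2) ≃ {K : Finset (RVert n k) // IsMaxClique (redGraph n k G) K} :=
  Equiv.ofBijective (fun v => ⟨redClique n k G v, isMaxClique_redClique v⟩)
    ⟨fun _ _ h => redClique_injective (congrArg Subtype.val h), fun K =>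
      let ⟨v, hv⟩ := exists_subset_redClique K.2.1
      ⟨v, Subtype.ext (K.2.2 _ (redGraph_isClique_redClique v) hv)⟩⟩

lemma redClique_redCliqueEquiv_symm
    (K : {K : Finset (RVert n k) // IsMaxClique (redGraph n k G) K}) :
    redClique n k G ((redCliqueEquiv n k G).symm K) = K.1 :=
  congrArg Subtype.val ((redCliqueEquiv n k G).apply_symm_apply K)

lemma cliqueTree_adj_cx_xy {N : ℕ} (i : Fin N) : (cliqueTree N).Adj (.cx i) (.xy i) :=
  parentGraph_adj.mpr ⟨by simp, .inr rfl⟩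

lemma redClique_inter_subset_cSet {u v : CliqueIdx (n + k + 2)} (huv : u ≠ v)
    (hadj : ¬ (cliqueTree _).Adj u v) : redClique n k G u ∩ redClique n k G v ⊆ cSet n k := by
  intro z hz
  rw [Finset.mem_inter] at hz
  cases z with
  | c i => simp
  | x a =>
    obtain ⟨rfl | rfl, rfl | rfl⟩ := And.imp x_mem_redClique.mp x_mem_redClique.mp hz
    exacts [(huv rfl).elim, (hadj (cliqueTree_adj_cx_xy a)).elim,
      (hadj (cliqueTree_adj_cx_xy a).symm).elim, (huv rfl).elim]
  | y a => exact (huv ((y_mem_redClique.mp hz.1).trans (y_mem_redClique.mp hz.2).symm)).elim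
  | w a => exact (huv ((w_mem_redClique.mp hz.1).trans (w_mem_redClique.mp hz.2).symm)).elim

lemma subsingleton_or_cSet_subset_redClique (v : CliqueIdx (n + k + 2)) :
    ((cliqueTree _).neighborSet v).Subsingleton ∨ cSet n k ⊆ redClique n k G v := by
  cases v with
  | cx i => exact .inr fun u hu => by simp [hu]
  | xy i | w i => exact .inl (cliqueTree_neighborSet_subsingleton (by simp))

end Reduction

theorem dominatingSetReduction_chordal_cliqueTree_degree_le_four_general
    (n k : ℕ) (G : SimpleGraph (Fin n)) :
    Chordal (redGraph n k G) ∧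
    ∃ T : SimpleGraph {K : Finset (RVert n k) // IsMaxClique (redGraph n k G) K},
      T.IsTree ∧ CliqueIntersectionProperty (redGraph n k G) T ∧
      ∀ K, (T.neighborSet K).ncard ≤ 4 := by
  set e := (redCliqueEquiv n k G).symm
  have hT : ((cliqueTree _).comap e).IsTree := (Iso.comap e _).isTree_iff.mpr (cliqueTree_isTree _)
  refine ⟨redGraph_chordal, _, hT, fun K K' p hp L hL => ?_, fun K => ?_⟩
  · refine hp.inter_subset_of_mem_support hT.isAcyclic (f := Subtype.val) (S := cSet n k)
      (fun K K' hne hadj => ?_) (fun L => ?_) hL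
    · rw [← redClique_redCliqueEquiv_symm K, ← redClique_redCliqueEquiv_symm K']
      exact redClique_inter_subset_cSet (e.injective.ne hne) hadj
    · rw [neighborSet_comap, ← redClique_redCliqueEquiv_symm L]
      exact (subsingleton_or_cSet_subset_redClique _).imp_left (·.preimage e.injective)
  · rw [neighborSet_comap, Set.ncard_preimage_of_injective_subset_range e.injective (by simp)]
    exact ncard_neighborSet_cliqueTree_le _

theorem dominatingSetReduction_chordal_cliqueTree_degree_le_four
    (n k : ℕ) (hn : 1 ≤ n) (hk1 : 1 ≤ k) (hkn : k ≤ n) (G : SimpleGraph (Fin n)) :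
    Chordal (redGraph n k G) ∧
    ∃ T : SimpleGraph {K : Finset (RVert n k) // IsMaxClique (redGraph n k G) K},
      T.IsTree ∧ CliqueIntersectionProperty (redGraph n k G) T ∧
      ∀ K, (T.neighborSet K).ncard ≤ 4 :=
  dominatingSetReduction_chordal_cliqueTree_degree_le_four_general n k G
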